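/- Let n ≥ 2 be an integer, ρ ≥ 0 a real number, and q a real number satisfying q ≥ (n + 6 + √(7n² + 2n + 4))/2 + √(ρ·3n((n+1)(q+n−3) + q−2)/2). Then q > n + 1 + 3nq/(2q + 3n − 6) + ρ·(n(n+1)/2 + 3nq/(2q + 3n − 6)). -/
import Mathlib


set_option maxHeartbeats 1000000 in
theorem stmt_3 (n : ℕ) (hn : 2 ≤ n) (ρ : ℝ) (hρ : 0 ≤ ρ) (q : ℝ)
    (hq : ((n : ℝ) + 6 + Real.sqrt (7 * (n : ℝ) ^ 2 + 2 * n + 4)) / 2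
        + Real.sqrt (ρ * (3 * n * ((n + 1) * (q + n - 3) + q - 2)) / 2) ≤ q) :
    q > (n : ℝ) + 1 + 3 * n * q / (2 * q + 3 * n - 6)
        + ρ * ((n : ℝ) * (n + 1) / 2 + 3 * n * q / (2 * q + 3 * n - 6)) := by
  have hn' : (2 : ℝ) ≤ (n : ℝ) := by exact_mod_cast hn
  set R := Real.sqrt (7 * (n : ℝ) ^ 2 + 2 * n + 4) with hRdef
  set s := Real.sqrt (ρ * (3 * n * ((n + 1) * (q + n - 3) + q - 2)) / 2) with hsdef
  have hargR : (0:ℝ) ≤ 7 * (n : ℝ) ^ 2 + 2 * n + 4 := by nlinarith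
  have hR0 : 0 ≤ R := Real.sqrt_nonneg _
  have hR2 : R ^ 2 = 7 * (n : ℝ) ^ 2 + 2 * n + 4 := Real.sq_sqrt hargR
  have hRn : (n : ℝ) ≤ R := by nlinarith [hR2, hR0]
  have hs0 : 0 ≤ s := Real.sqrt_nonneg _
  have hq3 : (n : ℝ) + 3 ≤ q := by nlinarith [hq, hRn, hs0]
  have hA : (0:ℝ) ≤ ρ * (3 * n * ((n + 1) * (q + n - 3) + q - 2)) / 2 := by
    have : (0:ℝ) ≤ (3 * n * ((n + 1) * (q + n - 3) + q - 2)) := by nlinarith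
    positivity
  have hs2 : s ^ 2 = ρ * (3 * n * ((n + 1) * (q + n - 3) + q - 2)) / 2 :=
    Real.sq_sqrt hA
  have hD : (0:ℝ) < 2 * q + 3 * n - 6 := by nlinarith
  -- bound difference A - B
  have hAB : (0:ℝ) ≤ ρ * (3 * n * (((n + 1) * (q + n - 3) + q - 2)
      - ((n + 1) * (q / 3 + n / 2 - 1) + q))) := by
    have h1 : (0:ℝ) ≤ ((n + 1) * (q + n - 3) + q - 2) - ((n + 1) * (q / 3 + n / 2 - 1) + q) := by
      nlinarith
    have h2 : (0:ℝ) ≤ (3 : ℝ) * n := by positivity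
    exact mul_nonneg hρ (mul_nonneg h2 h1)
  have h1 : 1 + s ≤ q - ((n : ℝ) + 4 + R) / 2 := by nlinarith [hq]
  have h2 : 1 + R + s ≤ q - ((n : ℝ) + 4 - R) / 2 := by nlinarith [hq]
  have hprod : (1 + s) * (1 + R + s) ≤ (q - ((n : ℝ) + 4 + R) / 2) * (q - ((n : ℝ) + 4 - R) / 2) :=
    mul_le_mul h1 h2 (by nlinarith) (by nlinarith)
  have hL : 2 * ((q - ((n : ℝ) + 4 + R) / 2) * (q - ((n : ℝ) + 4 - R) / 2))
      = 2 * q ^ 2 - (2 * n + 8) * q - 3 * (n:ℝ) ^ 2 + 3 * n + 6 := by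
    linear_combination (-(1:ℝ)/2) * hR2
  have hgt : 2 * ((1 + s) * (1 + R + s)) > 2 * s ^ 2 := by nlinarith [mul_nonneg hR0 hs0, hs0, hR0]
  have hRHS : ρ * (3 * n * ((n + 1) * (q / 3 + n / 2 - 1) + q)) ≤ 2 * s ^ 2 := by
    nlinarith [hAB, hs2]
  have key : ((n : ℝ) + 1) * (2 * q + 3 * n - 6) + 3 * n * q
      + ρ * (((n : ℝ) * (n + 1) / 2) * (2 * q + 3 * n - 6) + 3 * n * q)
      < q * (2 * q + 3 * n - 6) := by
    nlinarith [hprod, hL, hgt, hRHS]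
  set t := 3 * (n : ℝ) * q / (2 * q + 3 * n - 6) with htdef
  have ht : t * (2 * q + 3 * n - 6) = 3 * (n : ℝ) * q := div_mul_cancel₀ _ (ne_of_gt hD)
  rw [gt_iff_lt, ← sub_pos]
  have hfinal : (q - ((n : ℝ) + 1 + t + ρ * ((n : ℝ) * (n + 1) / 2 + t))) * (2 * q + 3 * n - 6) > 0 := by
    nlinarith [key, ht, mul_le_mul_of_nonneg_left ht.le hρ]
  nlinarith [hfinal, hD, mul_pos hfinal hD]
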